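/- Let R ⊆ H be a finite-dimensional Hopf subalgebra pair over a field k, with quotient right H-module Q = H/R⁺H. If H ⊇ R is a right semisimple extension (every right H-module N satisfies N | N ⊗_R H), then the trivial module k_ε is a direct summand of Q as right H-modules. -/

import Mathlib

/-! Inducing the trivial module gives `k_ε ⊗_R H ≅ H/R⁺H`. Indeed, under `H ⊗_k k_ε ≅ H`,
`h ⊗ c ↦ c h`, the defining relation `(r h) ⊗ c - h ⊗ ε(r) c` of the induced module goes to
`(s - ε(s)) h ∈ R⁺H` with `s = c r`, and every `r ∈ R⁺` is the image of `r ⊗ 1 - 1 ⊗ ε(r)`.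
So the relations span exactly `R⁺H`, and right semisimplicity applied to `N = k_ε` makes `k_ε` a
direct summand of `Q`. -/

open TensorProduct MulOpposite

universe u

variable (k : Type u) (H : Type u) [Field k] [Ring H] [HopfAlgebra k H]

/-- The counit of `H`, as a ring homomorphism out of `Hᵐᵒᵖ` (so that it equips
`k` with the structure of right `H`-module `k_ε`). -/
noncomputable def counitOp : Hᵐᵒᵖ →+* k :=
  ((Bialgebra.counitAlgHom k H).toRingHom).fromOpposite fun _ _ => mul_comm _ _

/-- The trivial right `H`-module `k_ε`. -/
def TrivMod : Type u := k

instance : AddCommGroup (TrivMod k) := inferInstanceAs (AddCommGroup k)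

noncomputable instance : Module Hᵐᵒᵖ (TrivMod k) :=
  Module.compHom k (counitOp k H)

variable (R : Subalgebra k H)

/-- The right ideal `R⁺H` generated by `R⁺ = R ∩ ker ε`. -/
noncomputable def augRightIdeal : Submodule Hᵐᵒᵖ H :=
  Submodule.span Hᵐᵒᵖ {r : H | r ∈ R ∧ Coalgebra.counit (R := k) r = 0}

/-- The quotient right `H`-module `Q = H / R⁺H`. -/
abbrev QuotientMod := H ⧸ augRightIdeal k H R

/-- The induced module `N ⊗_R H` of a right `H`-module `N` (written with the
`H` factor on the left, carrying the right `H`-action), realized as the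
quotient of `H ⊗_k N` by the subbimodule generated by the relations
`(r·h) ⊗ n - h ⊗ (n·r)` for `r ∈ R`. -/
noncomputable abbrev IndMod (N : Type u) [AddCommGroup N] [Module k N]
    [Module Hᵐᵒᵖ N] :=
  (H ⊗[k] N) ⧸ Submodule.span Hᵐᵒᵖ
    {z : H ⊗[k] N | ∃ r ∈ R, ∃ h : H, ∃ n : N,
      z = (r * h) ⊗ₜ[k] n - h ⊗ₜ[k] (op r • n)}

/-- `M` is a direct summand of `r` copies of `N`. -/
def Divides (A : Type*) [Ring A] (M N : Type*) [AddCommGroup M] [Module A M]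
    [AddCommGroup N] [Module A N] (r : ℕ) : Prop :=
  ∃ (i : M →ₗ[A] (Fin r → N)) (p : (Fin r → N) →ₗ[A] M), p.comp i = LinearMap.id

theorem Divides.of_retract {A : Type*} [Ring A] {M N P : Type*} [AddCommGroup M] [Module A M]
    [AddCommGroup N] [Module A N] [AddCommGroup P] [Module A P] {r : ℕ}
    (h : Divides A M N r) (f : N →ₗ[A] P) (g : P →ₗ[A] N) (hgf : g ∘ₗ f = LinearMap.id) :
    Divides A M P r := by
  obtain ⟨i, p, hpi⟩ := h
  have hcomp : g.compLeft (Fin r) ∘ₗ f.compLeft (Fin r) = LinearMap.id :=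
    LinearMap.ext fun v => funext fun j => LinearMap.congr_fun hgf (v j)
  refine ⟨f.compLeft (Fin r) ∘ₗ i, p ∘ₗ g.compLeft (Fin r), ?_⟩
  rw [← hpi, LinearMap.comp_assoc, ← LinearMap.comp_assoc i, hcomp, LinearMap.id_comp]

noncomputable instance : Module k (TrivMod k) := inferInstanceAs (Module k k)

theorem TrivMod.smul_def (a : Hᵐᵒᵖ) (x : TrivMod k) :
    a • x = Coalgebra.counit (R := k) (unop a) • x := rfl

instance : IsScalarTower k Hᵐᵒᵖ (TrivMod k) where
  smul_assoc c a x := by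
    rw [TrivMod.smul_def, TrivMod.smul_def, unop_smul, map_smul, smul_eq_mul, mul_smul]

def TrivMod.equivSelf : TrivMod k ≃ₗ[k] k := LinearEquiv.refl k k

theorem TrivMod.equivSelf_smul (a : Hᵐᵒᵖ) (x : TrivMod k) :
    TrivMod.equivSelf k (a • x) = Coalgebra.counit (R := k) (unop a) * TrivMod.equivSelf k x :=
  rfl

noncomputable def tensorTrivModEquiv : H ⊗[k] TrivMod k ≃ₗ[Hᵐᵒᵖ] H :=
  TensorProduct.AlgebraTensorModule.congr (LinearEquiv.refl Hᵐᵒᵖ H) (TrivMod.equivSelf k) ≪≫ₗ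
    TensorProduct.AlgebraTensorModule.rid k Hᵐᵒᵖ H

theorem tensorTrivModEquiv_tmul (h : H) (c : TrivMod k) :
    tensorTrivModEquiv k H (h ⊗ₜ c) = TrivMod.equivSelf k c • h := rfl

theorem map_indRelations_eq_augRightIdeal :
    (Submodule.span Hᵐᵒᵖ {z : H ⊗[k] TrivMod k | ∃ r ∈ R, ∃ h : H, ∃ n : TrivMod k,
      z = (r * h) ⊗ₜ[k] n - h ⊗ₜ[k] (op r • n)}).map (tensorTrivModEquiv k H).toLinearMap =
      augRightIdeal k H R := by
  rw [Submodule.map_span, augRightIdeal]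
  apply le_antisymm
  · rw [Submodule.span_le]
    rintro _ ⟨_, ⟨r, hr, h, c, rfl⟩, rfl⟩
    set s := TrivMod.equivSelf k c • r
    have hs : s - Coalgebra.counit (R := k) s • 1 ∈ augRightIdeal k H R :=
      Submodule.subset_span ⟨R.sub_mem (R.smul_mem hr _) (R.smul_mem R.one_mem _), by simp⟩
    have himage : tensorTrivModEquiv k H ((r * h) ⊗ₜ[k] c - h ⊗ₜ[k] (op r • c)) =
        op h • (s - Coalgebra.counit (R := k) s • 1) := by
      rw [map_sub, tensorTrivModEquiv_tmul, tensorTrivModEquiv_tmul, TrivMod.equivSelf_smul]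
      simp [s, sub_mul, mul_comm]
    rw [LinearEquiv.coe_coe, himage]
    exact Submodule.smul_mem _ _ hs
  · rw [Submodule.span_le]
    rintro r ⟨hr, hr0⟩
    set e := (TrivMod.equivSelf k).symm 1
    refine Submodule.subset_span ⟨(r * 1) ⊗ₜ[k] e - 1 ⊗ₜ[k] (op r • e), ⟨r, hr, 1, e, rfl⟩, ?_⟩
    rw [LinearEquiv.coe_coe, map_sub, tensorTrivModEquiv_tmul, tensorTrivModEquiv_tmul,
      TrivMod.equivSelf_smul]
    simp [e, hr0]

noncomputable def indTrivModEquivQuotient :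
    IndMod k H R (TrivMod k) ≃ₗ[Hᵐᵒᵖ] QuotientMod k H R :=
  Submodule.Quotient.equiv _ _ (tensorTrivModEquiv k H) (map_indRelations_eq_augRightIdeal k H R)

theorem trivial_divides_quotient_of_semisimple_extension
    (hss : ∀ (N : Type u) [AddCommGroup N] [Module k N] [Module Hᵐᵒᵖ N]
      [IsScalarTower k Hᵐᵒᵖ N], Divides Hᵐᵒᵖ N (IndMod k H R N) 1) :
    Divides Hᵐᵒᵖ (TrivMod k) (QuotientMod k H R) 1 :=
  (hss (TrivMod k)).of_retract (indTrivModEquivQuotient k H R).toLinearMap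
    (indTrivModEquivQuotient k H R).symm.toLinearMap (by ext; simp)
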